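/- arXiv:1812.08487 — 5 statements merged into one kernel-verified Lean document; each statement's English description precedes it below -/
import Mathlib

section
/- Let V be a finite-dimensional real vector space with k linearly independent linear functionals η^1,...,η^k and k alternating bilinear forms ω^1,...,ω^k. If the intersection of the kernels of all η^α and all ω^α is zero and the intersection of the kernels of all ω^α has dimension k, then the linear map ♭: V^k → V* defined by ♭(X_1,...,X_k) = Σ_α (ι_{X_α}ω^α + η^α(X_α)·η^α) is surjective. -/
/-- the flat morphism of a (linear-algebraic) k-cosymplectic structure
is surjective. -/
theorem stmt_0
    (V : Type*) [AddCommGroup V] [Module ℝ V] [FiniteDimensional ℝ V]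
    (k : ℕ)
    (η : Fin k → (V →ₗ[ℝ] ℝ))
    (ω : Fin k → (V →ₗ[ℝ] V →ₗ[ℝ] ℝ))
    (hη : LinearIndependent ℝ η)
    (halt : ∀ α v, ω α v v = 0)
    (hker : (⨅ α, LinearMap.ker (η α)) ⊓ (⨅ α, LinearMap.ker (ω α)) = ⊥)
    (hdim : Module.finrank ℝ ↥(⨅ α, LinearMap.ker (ω α)) = k) :
    Function.Surjective
      (fun X : Fin k → V => ∑ α, (ω α (X α) + (η α (X α)) • (η α))) := by
  classical
  -- package the map as a linear map
  set L : (Fin k → V) →ₗ[ℝ] (V →ₗ[ℝ] ℝ) :=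
    { toFun := fun X => ∑ α, (ω α (X α) + (η α (X α)) • (η α))
      map_add' := by
        intro X Y
        rw [← Finset.sum_add_distrib]
        refine Finset.sum_congr rfl fun α _ => ?_
        simp [add_smul]
        abel
      map_smul' := by
        intro c X
        simp only [Pi.smul_apply, map_smul, RingHom.id_apply, Finset.smul_sum]
        refine Finset.sum_congr rfl fun α _ => ?_
        simp [smul_add, smul_smul] } with hL
  show Function.Surjective L
  -- antisymmetry
  have hsk : ∀ α (x y : V), ω α y x = - ω α x y := by
    intro α x y
    have h0 := halt α (x + y)
    simp only [map_add, LinearMap.add_apply] at h0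
    rw [halt α x, halt α y] at h0
    linarith
  -- key: if L X v = 0 for all X then v = 0
  have key : ∀ v : V, (∀ X, L X v = 0) → v = 0 := by
    intro v hv
    have h1 : ∀ α (x : V), ω α x v + η α x * η α v = 0 := by
      intro α x
      have := hv (Pi.single α x)
      simp only [hL, LinearMap.coe_mk, AddHom.coe_mk, LinearMap.sum_apply,
        LinearMap.add_apply, LinearMap.smul_apply, smul_eq_mul] at this
      rw [Finset.sum_eq_single α] at this
      · simpa using this
      · intro β _ hβ; simp [Pi.single_eq_of_ne hβ]
      · simp
    set K := ⨅ α, LinearMap.ker (ω α) with hK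
    -- the map K → ℝ^k given by the η's is bijective
    let e : K →ₗ[ℝ] (Fin k → ℝ) := LinearMap.pi (fun α => (η α).comp K.subtype)
    have einj : Function.Injective e := by
      rw [← LinearMap.ker_eq_bot, eq_bot_iff]
      intro z hz
      have hz0 : e z = 0 := LinearMap.mem_ker.mp hz
      have hz' : ∀ α, η α (z : V) = 0 := by
        intro α
        have := congrFun hz0 α
        simpa [e] using this
      have : (z : V) ∈ (⨅ α, LinearMap.ker (η α)) ⊓ K := by
        exact ⟨Submodule.mem_iInf _ |>.mpr fun α => hz' α, z.2⟩
      rw [hker] at this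
      simp only [Submodule.mem_bot] at this ⊢
      exact Subtype.ext this
    have esurj : Function.Surjective e := by
      refine (LinearMap.injective_iff_surjective_of_finrank_eq_finrank ?_).mp einj
      simp [hdim, ← hK]
    -- Reeb vectors
    have hReeb : ∀ β : Fin k, ∃ R : K, ∀ α, η α (R : V) = (Pi.single β 1 : Fin k → ℝ) α := by
      intro β
      obtain ⟨R, hR⟩ := esurj (Pi.single β 1)
      refine ⟨R, fun α => ?_⟩
      have := congrFun hR α
      simpa [e] using this
    -- η α v = 0 for all α
    have hηv : ∀ α, η α v = 0 := by
      intro β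
      obtain ⟨R, hR⟩ := hReeb β
      have hRker : ω β (R : V) = 0 := by
        have := (Submodule.mem_iInf _).mp R.2 β
        exact LinearMap.mem_ker.mp this
      have := h1 β (R : V)
      rw [hRker, hR β] at this
      simpa using this
    -- ω α · v = 0 for all α
    have hωv : ∀ α, (v : V) ∈ LinearMap.ker (ω α) := by
      intro α
      rw [LinearMap.mem_ker]
      ext x
      have := h1 α x
      rw [hηv α, mul_zero, add_zero] at this
      rw [LinearMap.zero_apply, hsk α x v, this, neg_zero]
    have : v ∈ (⨅ α, LinearMap.ker (η α)) ⊓ K := by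
      exact ⟨Submodule.mem_iInf _ |>.mpr fun α => hηv α,
        Submodule.mem_iInf _ |>.mpr hωv⟩
    rw [hker] at this
    simpa using this
  -- conclude surjectivity via annihilators
  rw [← LinearMap.range_eq_top]
  have hco : (LinearMap.range L).dualCoannihilator = ⊥ := by
    rw [eq_bot_iff]
    intro v hv
    rw [Submodule.mem_dualCoannihilator] at hv
    exact key v fun X => hv (L X) (LinearMap.mem_range_self L X)
  calc LinearMap.range L
      = (LinearMap.range L).dualCoannihilator.dualAnnihilator :=
        (Subspace.dualCoannihilator_dualAnnihilator_eq).symm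
    _ = ⊤ := by rw [hco, Submodule.dualAnnihilator_bot]
end

section
/- Let V be a real vector space of dimension k(n+1)+n, let η^1,...,η^k be linear functionals with η^1 ∧ ... ∧ η^k ≠ 0 (i.e. linearly independent), and ω^1,...,ω^k alternating bilinear forms such that (⋂_α ker η^α) ∩ (⋂_α ker ω^α) = {0} and dim(⋂_α ker ω^α) = k. Then there exists a unique family of vectors R_1,...,R_k ∈ V satisfying η^β(R_α) = δ^β_α and ι_{R_α}ω^β = 0 for all α, β. -/
/-- existence and uniqueness of Reeb vectors for a (linear-algebraic)
k-cosymplectic structure. -/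
theorem stmt_1
    (V : Type*) [AddCommGroup V] [Module ℝ V] [FiniteDimensional ℝ V]
    (k n : ℕ)
    (hdimV : Module.finrank ℝ V = k * (n + 1) + n)
    (η : Fin k → (V →ₗ[ℝ] ℝ))
    (ω : Fin k → (V →ₗ[ℝ] V →ₗ[ℝ] ℝ))
    (hη : LinearIndependent ℝ η)
    (halt : ∀ α v, ω α v v = 0)
    (hker : (⨅ α, LinearMap.ker (η α)) ⊓ (⨅ α, LinearMap.ker (ω α)) = ⊥)
    (hdim : Module.finrank ℝ ↥(⨅ α, LinearMap.ker (ω α)) = k) :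
    ∃! R : Fin k → V, ∀ α β,
      η β (R α) = (if α = β then (1 : ℝ) else 0) ∧ ω β (R α) = 0 := by
  set W : Submodule ℝ V := ⨅ α, LinearMap.ker (ω α) with hW
  -- the map Φ : W → ℝ^k given by the η's
  set Φ : W →ₗ[ℝ] (Fin k → ℝ) :=
    LinearMap.pi (fun α => (η α).comp W.subtype) with hΦ
  have hinj : Function.Injective Φ := by
    rw [← LinearMap.ker_eq_bot]
    ext ⟨w, hw⟩
    simp only [LinearMap.mem_ker, Submodule.mem_bot, hΦ]
    constructor
    · intro h
      have h1 : w ∈ (⨅ α, LinearMap.ker (η α)) ⊓ W := by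
        refine ⟨Submodule.mem_iInf _ |>.2 fun α => ?_, hw⟩
        have := congrFun h α
        simpa using this
      rw [hker] at h1
      simpa using h1
    · intro h
      simp only [h]
      ext α
      simp
  have hdim' : Module.finrank ℝ W = Module.finrank ℝ (Fin k → ℝ) := by
    simp [hdim]
  let e : W ≃ₗ[ℝ] (Fin k → ℝ) := LinearMap.linearEquivOfInjective Φ hinj hdim'
  have he : ∀ w, e w = Φ w := fun w => rfl
  refine ⟨fun α => (e.symm (Pi.single α 1) : V), ?_, ?_⟩
  · intro α β
    constructor
    · have : Φ (e.symm (Pi.single α 1)) = Pi.single α 1 := by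
        rw [← he]; exact e.apply_symm_apply _
      have := congrFun this β
      simp only [hΦ, LinearMap.pi_apply, LinearMap.comp_apply,
        Submodule.subtype_apply] at this
      rw [this, Pi.single_apply]
      simp [eq_comm]
    · have hw : ((e.symm (Pi.single α 1) : W) : V) ∈ W := (e.symm (Pi.single α 1)).2
      exact (Submodule.mem_iInf _).1 hw β
  · intro R hR
    funext α
    have hRW : R α ∈ W := Submodule.mem_iInf _ |>.2 fun β => (hR α β).2
    have : e ⟨R α, hRW⟩ = Pi.single α 1 := by
      rw [he]
      ext β
      simp only [hΦ, LinearMap.pi_apply, LinearMap.comp_apply, Submodule.subtype_apply]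
      rw [(hR α β).1, Pi.single_apply]
      simp [eq_comm]
    have h2 : (⟨R α, hRW⟩ : W) = e.symm (Pi.single α 1) := by
      rw [← this, e.symm_apply_apply]
    exact congrArg Subtype.val h2
end

section
/- For the affine Lagrangian L = x^2(q^1 v^1_2 + q^2 v^2_2) + q^1 q^2 on ℝ^2 × ℝ^2 × ℝ^4 with coordinates (x^1,x^2,q^1,q^2,v^1_1,v^1_2,v^2_1,v^2_2): a 2-tuple of vector fields X_α = ∂/∂x^α + F^l_α ∂/∂q^l + G^l_{αν} ∂/∂v^l_ν satisfies Σ_α ι_{X_α} ω^α_L = dE_L + Σ_μ (∂L/∂x^μ) dx^μ at a point if and only if (v^1_2 − F^1_2) q^1 + (v^2_2 − F^2_2) q^2 = 0 and q^1 = q^2 at that point. -/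
section Aux
abbrev MM := ((Fin 2 → ℝ) × (Fin 2 → ℝ) × (Fin 2 → Fin 2 → ℝ))

noncomputable def cx (i : Fin 2) : MM →L[ℝ] ℝ :=
  (ContinuousLinearMap.proj i).comp (ContinuousLinearMap.fst ℝ _ _)
noncomputable def cq (i : Fin 2) : MM →L[ℝ] ℝ :=
  (ContinuousLinearMap.proj i).comp
    ((ContinuousLinearMap.fst ℝ _ _).comp (ContinuousLinearMap.snd ℝ _ _))
noncomputable def cv (i j : Fin 2) : MM →L[ℝ] ℝ :=
  (ContinuousLinearMap.proj j).comp
    (((ContinuousLinearMap.proj i : (Fin 2 → Fin 2 → ℝ) →L[ℝ] (Fin 2 → ℝ))).comp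
    ((ContinuousLinearMap.snd ℝ _ _).comp (ContinuousLinearMap.snd ℝ _ _)))

@[simp] lemma cx_apply (i : Fin 2) (w : MM) : cx i w = w.1 i := rfl
@[simp] lemma cq_apply (i : Fin 2) (w : MM) : cq i w = w.2.1 i := rfl
@[simp] lemma cv_apply (i j : Fin 2) (w : MM) : cv i j w = w.2.2 i j := rfl

lemma hdx (i : Fin 2) (p : MM) : HasFDerivAt (fun p : MM => p.1 i) (cx i) p :=
  (cx i).hasFDerivAt
lemma hdq (i : Fin 2) (p : MM) : HasFDerivAt (fun p : MM => p.2.1 i) (cq i) p :=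
  (cq i).hasFDerivAt
lemma hdv (i j : Fin 2) (p : MM) : HasFDerivAt (fun p : MM => p.2.2 i j) (cv i j) p :=
  (cv i j).hasFDerivAt
end Aux


/-- the affine Lagrangian `L = x²(q¹v¹₂ + q²v²₂) + q¹q²` on
`ℝ² × ℝ² × ℝ⁴`: the Lagrangian field equation at a point is equivalent to
`(v¹₂ − F¹₂)q¹ + (v²₂ − F²₂)q² = 0` and `q¹ = q²`.
Indices `0, 1` of `Fin 2` stand for `1, 2`; a point is `p = (x, q, v)` with
`v i α = v^{i+1}_{α+1}`. -/
theorem stmt_12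
    (L E_L : ((Fin 2 → ℝ) × (Fin 2 → ℝ) × (Fin 2 → Fin 2 → ℝ)) → ℝ)
    (hLdef : ∀ p, L p =
      p.1 1 * (p.2.1 0 * p.2.2 0 1 + p.2.1 1 * p.2.2 1 1) + p.2.1 0 * p.2.1 1)
    (hEL : ∀ p, E_L p = -(p.2.1 0 * p.2.1 1))
    -- the Poincaré–Cartan 2-forms: ω¹_L = 0, ω²_L = −q¹ dx²∧dq¹ − q² dx²∧dq²
    (ω : Fin 2 → ((Fin 2 → ℝ) × (Fin 2 → ℝ) × (Fin 2 → Fin 2 → ℝ)) →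
      ((Fin 2 → ℝ) × (Fin 2 → ℝ) × (Fin 2 → Fin 2 → ℝ)) →
      ((Fin 2 → ℝ) × (Fin 2 → ℝ) × (Fin 2 → Fin 2 → ℝ)) → ℝ)
    (hω0 : ∀ p u w, ω 0 p u w = 0)
    (hω1 : ∀ p u w, ω 1 p u w =
      -(p.2.1 0) * (u.1 1 * w.2.1 0 - w.1 1 * u.2.1 0)
        - (p.2.1 1) * (u.1 1 * w.2.1 1 - w.1 1 * u.2.1 1))
    -- the 2-vector field X_α = ∂/∂x^α + F^l_α ∂/∂q^l + G^l_{αν} ∂/∂v^l_ν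
    (F : Fin 2 → Fin 2 → ((Fin 2 → ℝ) × (Fin 2 → ℝ) × (Fin 2 → Fin 2 → ℝ)) → ℝ)
    (G : Fin 2 → Fin 2 → Fin 2 →
      ((Fin 2 → ℝ) × (Fin 2 → ℝ) × (Fin 2 → Fin 2 → ℝ)) → ℝ)
    (X : Fin 2 → ((Fin 2 → ℝ) × (Fin 2 → ℝ) × (Fin 2 → Fin 2 → ℝ)) →
      ((Fin 2 → ℝ) × (Fin 2 → ℝ) × (Fin 2 → Fin 2 → ℝ)))
    (hX : ∀ α p, X α p =
      ((Pi.single α 1 : Fin 2 → ℝ), fun l => F l α p, fun l ν => G l α ν p)) :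
    ∀ p,
      -- the field equation  Σ_α ι_{X_α} ω^α_L = dE_L + Σ_μ (∂L/∂x^μ) dx^μ  at p
      ((∀ w, ∑ α, ω α p (X α p) w =
          fderiv ℝ E_L p w
            + ∑ μ, fderiv ℝ L p ((Pi.single μ 1 : Fin 2 → ℝ), 0, 0) * w.1 μ)
        ↔
        ((p.2.2 0 1 - F 0 1 p) * p.2.1 0 + (p.2.2 1 1 - F 1 1 p) * p.2.1 1 = 0
          ∧ p.2.1 0 = p.2.1 1)) := by
  intro p
  have hE : fderiv ℝ E_L p = -(p.2.1 0 • cq 1 + p.2.1 1 • cq 0) := by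
    have h : HasFDerivAt E_L (-(p.2.1 0 • cq 1 + p.2.1 1 • cq 0)) p := by
      rw [funext hEL]; exact ((hdq 0 p).mul (hdq 1 p)).neg
    exact h.fderiv
  have hL : fderiv ℝ L p =
      (p.1 1 • ((p.2.1 0 • cv 0 1 + p.2.2 0 1 • cq 0)
          + (p.2.1 1 • cv 1 1 + p.2.2 1 1 • cq 1))
        + (p.2.1 0 * p.2.2 0 1 + p.2.1 1 * p.2.2 1 1) • cx 1)
      + (p.2.1 0 • cq 1 + p.2.1 1 • cq 0) := by
    have h : HasFDerivAt L
        ((p.1 1 • ((p.2.1 0 • cv 0 1 + p.2.2 0 1 • cq 0)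
            + (p.2.1 1 • cv 1 1 + p.2.2 1 1 • cq 1))
          + (p.2.1 0 * p.2.2 0 1 + p.2.1 1 * p.2.2 1 1) • cx 1)
        + (p.2.1 0 • cq 1 + p.2.1 1 • cq 0)) p := by
      rw [funext hLdef]
      exact ((hdx 1 p).mul (((hdq 0 p).mul (hdv 0 1 p)).add
        ((hdq 1 p).mul (hdv 1 1 p)))).add ((hdq 0 p).mul (hdq 1 p))
    exact h.fderiv
  rw [hE, hL]
  simp only [Fin.sum_univ_two, hω0, hω1, hX, ContinuousLinearMap.add_apply,
    ContinuousLinearMap.neg_apply, ContinuousLinearMap.smul_apply,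
    cx_apply, cq_apply, cv_apply, smul_eq_mul, Pi.single_apply]
  simp only [Fin.zero_eta, Fin.mk_one, Pi.zero_apply, if_true, if_false,
    Fin.one_eq_zero_iff, Fin.zero_eq_one_iff, Nat.succ_ne_self, ite_true, ite_false,
    mul_zero, zero_mul, mul_one, one_mul, add_zero, zero_add, if_pos rfl]
  constructor
  · intro h
    have h1 := h ((0 : Fin 2 → ℝ), (Pi.single 0 1 : Fin 2 → ℝ), 0)
    have h3 := h ((Pi.single 1 1 : Fin 2 → ℝ), (0 : Fin 2 → ℝ), 0)
    norm_num [Pi.single_apply] at h1 h3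
    constructor
    · nlinarith [h1, h3]
    · linarith [h1]
  · rintro ⟨h1, h2⟩ w
    linear_combination (w.2.1 1 - w.2.1 0) * h2 - w.1 1 * h1
end

section
/- For the Lagrangian L = q_t²/(2e) + σ(t,s)² e/2 − τ q_s²/2 with forms as above, if a pair of vector fields X_t = ∂/∂t + B_t^q ∂/∂q + B_t^e ∂/∂e + ... , X_s = ∂/∂s + B_s^q ∂/∂q + B_s^e ∂/∂e + ... satisfies ι_{X_t}ω_L^t + ι_{X_s}ω_L^s = dE_L + (∂L/∂t) dt + (∂L/∂s) ds at a point, then necessarily q_t²/e² = σ² at that point (i.e. the primary constraint ζ₁ = (q_t²/e² − σ²)/2 = 0 holds), and B_t^q = q_t, B_s^q = q_s at that point. -/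
/-- for the singular quadratic Lagrangian
`L = q_t²/(2e) + σ(t,s)²e/2 − τq_s²/2`, any solution of the Lagrangian field
equation at a point satisfies the primary constraint `q_t²/e² = σ²`, and its
coefficients on `∂/∂q` are `B_t^q = q_t`, `B_s^q = q_s`.
A point is `p = ((t,s),(q,e),((q_t,q_s),(e_t,e_s)))`. -/
theorem stmt_15
    (σ : ℝ × ℝ → ℝ) (hσ : ContDiff ℝ (⊤ : ℕ∞) σ) (τ : ℝ) (hτ : τ ≠ 0)
    (L E_L : ((ℝ × ℝ) × (ℝ × ℝ) × ((ℝ × ℝ) × (ℝ × ℝ))) → ℝ)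
    (hLdef : ∀ p, L p =
      (p.2.2.1.1)^2 / (2 * p.2.1.2) + (σ p.1)^2 * p.2.1.2 / 2
        - τ * (p.2.2.1.2)^2 / 2)
    (hEL : ∀ p, E_L p =
      (p.2.2.1.1)^2 / (2 * p.2.1.2) - (σ p.1)^2 * p.2.1.2 / 2
        - τ * (p.2.2.1.2)^2 / 2)
    -- ω_L^t = (q_t/e²) de∧dq − (1/e) dq_t∧dq,  ω_L^s = τ dq_s∧dq
    (ωt ωs : ((ℝ × ℝ) × (ℝ × ℝ) × ((ℝ × ℝ) × (ℝ × ℝ))) →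
      ((ℝ × ℝ) × (ℝ × ℝ) × ((ℝ × ℝ) × (ℝ × ℝ))) →
      ((ℝ × ℝ) × (ℝ × ℝ) × ((ℝ × ℝ) × (ℝ × ℝ))) → ℝ)
    (hωt : ∀ p u w, ωt p u w =
      (p.2.2.1.1 / (p.2.1.2)^2) * (u.2.1.2 * w.2.1.1 - u.2.1.1 * w.2.1.2)
        - (1 / p.2.1.2) * (u.2.2.1.1 * w.2.1.1 - u.2.1.1 * w.2.2.1.1))
    (hωs : ∀ p u w, ωs p u w =
      τ * (u.2.2.1.2 * w.2.1.1 - u.2.1.1 * w.2.2.1.2))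
    -- the pair of vector fields with the required coefficients on ∂/∂t, ∂/∂s
    (Btq Bte Bsq Bse Ctqt Ctqs Ctet Ctes Csqt Csqs Cset Cses :
      ((ℝ × ℝ) × (ℝ × ℝ) × ((ℝ × ℝ) × (ℝ × ℝ))) → ℝ)
    (Xt Xs : ((ℝ × ℝ) × (ℝ × ℝ) × ((ℝ × ℝ) × (ℝ × ℝ))) →
      ((ℝ × ℝ) × (ℝ × ℝ) × ((ℝ × ℝ) × (ℝ × ℝ))))
    (hXt : ∀ p, Xt p =
      ((1, 0), (Btq p, Bte p), ((Ctqt p, Ctqs p), (Ctet p, Ctes p))))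
    (hXs : ∀ p, Xs p =
      ((0, 1), (Bsq p, Bse p), ((Csqt p, Csqs p), (Cset p, Cses p)))) :
    ∀ p : (ℝ × ℝ) × (ℝ × ℝ) × ((ℝ × ℝ) × (ℝ × ℝ)), 0 < p.2.1.2 →
      -- the field equation  ι_{X_t}ω_L^t + ι_{X_s}ω_L^s = dE_L + L_t dt + L_s ds
      (∀ w, ωt p (Xt p) w + ωs p (Xs p) w =
        fderiv ℝ E_L p w
          + fderiv ℝ L p ((1, 0), (0, 0), ((0, 0), (0, 0))) * w.1.1
          + fderiv ℝ L p ((0, 1), (0, 0), ((0, 0), (0, 0))) * w.1.2) →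
      -- primary constraint and determined coefficients
      ((p.2.2.1.1)^2 / (p.2.1.2)^2 = (σ p.1)^2 ∧
        Btq p = p.2.2.1.1 ∧ Bsq p = p.2.2.1.2) := by

  intro p hp heq
  have hEeq : E_L = fun p : ((ℝ × ℝ) × (ℝ × ℝ) × ((ℝ × ℝ) × (ℝ × ℝ))) =>
      (p.2.2.1.1)^2 / (2 * p.2.1.2) - (σ p.1)^2 * p.2.1.2 / 2
        - τ * (p.2.2.1.2)^2 / 2 := funext hEL
  subst hEeq
  obtain ⟨⟨t, s⟩, ⟨q, e⟩, ⟨⟨qt, qs⟩, ⟨et, es⟩⟩⟩ := p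
  simp only at hp ⊢
  have he : e ≠ 0 := ne_of_gt hp
  set pt : ((ℝ × ℝ) × (ℝ × ℝ) × ((ℝ × ℝ) × (ℝ × ℝ))) :=
    ((t, s), (q, e), ((qt, qs), (et, es))) with hpt
  set F : ((ℝ × ℝ) × (ℝ × ℝ) × ((ℝ × ℝ) × (ℝ × ℝ))) → ℝ :=
    fun p => (p.2.2.1.1)^2 / (2 * p.2.1.2) - (σ p.1)^2 * p.2.1.2 / 2
        - τ * (p.2.2.1.2)^2 / 2 with hF
  have hσd : Differentiable ℝ σ := hσ.differentiable (by simp)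
  have hdiff : DifferentiableAt ℝ F pt := by
    have h1 : DifferentiableAt ℝ
        (fun p : ((ℝ × ℝ) × (ℝ × ℝ) × ((ℝ × ℝ) × (ℝ × ℝ))) =>
          (p.2.2.1.1)^2 / (2 * p.2.1.2)) pt := by
      have h1a : DifferentiableAt ℝ
          (fun p : ((ℝ × ℝ) × (ℝ × ℝ) × ((ℝ × ℝ) × (ℝ × ℝ))) => (p.2.2.1.1)^2) pt := by
        fun_prop
      have h1b : DifferentiableAt ℝ
          (fun p : ((ℝ × ℝ) × (ℝ × ℝ) × ((ℝ × ℝ) × (ℝ × ℝ))) => 2 * p.2.1.2) pt := by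
        fun_prop
      have hne : (2:ℝ) * e ≠ 0 := by simp [he]
      have h1c := h1a.mul (h1b.inv hne)
      simpa only [div_eq_mul_inv, Pi.mul_def, Pi.inv_def] using h1c
    have h2 : DifferentiableAt ℝ
        (fun p : ((ℝ × ℝ) × (ℝ × ℝ) × ((ℝ × ℝ) × (ℝ × ℝ))) =>
          (σ p.1)^2 * p.2.1.2 / 2) pt := by fun_prop
    have h3 : DifferentiableAt ℝ
        (fun p : ((ℝ × ℝ) × (ℝ × ℝ) × ((ℝ × ℝ) × (ℝ × ℝ))) =>
          τ * (p.2.2.1.2)^2 / 2) pt := by fun_prop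
    exact (h1.sub h2).sub h3
  have dirD : ∀ (w : ((ℝ × ℝ) × (ℝ × ℝ) × ((ℝ × ℝ) × (ℝ × ℝ)))) (c : ℝ),
      HasDerivAt (fun r : ℝ => F (pt + r • w)) c 0 → fderiv ℝ F pt w = c := by
    intro w c hc
    have hg : HasDerivAt (fun r : ℝ => pt + r • w) w 0 := by
      simpa using ((hasDerivAt_id (0 : ℝ)).smul_const w).const_add pt
    have hE' : HasFDerivAt F (fderiv ℝ F pt) (pt + (0:ℝ) • w) := by
      simpa using hdiff.hasFDerivAt
    have hcomp := hE'.comp_hasDerivAt 0 hg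
    exact hcomp.unique hc
  -- direction along e
  have hd1 : fderiv ℝ F pt ((0,0),(0,1),((0,0),(0,0))) =
      -(qt^2) / (2 * e^2) - (σ (t, s))^2 / 2 := by
    apply dirD
    have hfun : (fun r : ℝ => F (pt + r • (((0:ℝ),(0:ℝ)),((0:ℝ),(1:ℝ)),(((0:ℝ),(0:ℝ)),((0:ℝ),(0:ℝ)))))) =
        fun r : ℝ => qt^2 / (2 * (e + r)) - (σ (t, s))^2 * (e + r) / 2 - τ * qs^2 / 2 := by
      funext r
      simp [hF, hpt, Prod.smul_mk, Prod.mk_add_mk]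
    rw [hfun]
    have hden : HasDerivAt (fun r : ℝ => 2 * (e + r)) 2 0 := by
      simpa using ((hasDerivAt_id (0 : ℝ)).const_add e).const_mul 2
    have h1a := (hasDerivAt_const (0 : ℝ) (qt^2)).div hden (by simpa using he)
    have h1b : HasDerivAt (fun r : ℝ => (σ (t, s))^2 * (e + r) / 2) ((σ (t, s))^2 / 2) 0 := by
      simpa using (((hasDerivAt_id (0 : ℝ)).const_add e).const_mul ((σ (t, s))^2)).div_const 2
    have h1c : HasDerivAt (fun r : ℝ => τ * qs^2 / 2) 0 0 := hasDerivAt_const _ _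
    have hres := (h1a.sub h1b).sub h1c
    refine hres.congr_deriv ?_
    field_simp
    ring
  -- direction along q_t
  have hd2 : fderiv ℝ F pt ((0,0),(0,0),((1,0),(0,0))) = qt / e := by
    apply dirD
    have hfun : (fun r : ℝ => F (pt + r • (((0:ℝ),(0:ℝ)),((0:ℝ),(0:ℝ)),(((1:ℝ),(0:ℝ)),((0:ℝ),(0:ℝ)))))) =
        fun r : ℝ => (qt + r)^2 / (2 * e) - (σ (t, s))^2 * e / 2 - τ * qs^2 / 2 := by
      funext r
      simp [hF, hpt, Prod.smul_mk, Prod.mk_add_mk]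
    rw [hfun]
    have h2a : HasDerivAt (fun r : ℝ => (qt + r)^2 / (2 * e)) (2 * (qt + 0) / (2 * e)) 0 := by
      simpa using (((hasDerivAt_id (0 : ℝ)).const_add qt).pow 2).div_const (2 * e)
    have hres := (h2a.sub (hasDerivAt_const (0:ℝ) ((σ (t, s))^2 * e / 2))).sub
      (hasDerivAt_const (0:ℝ) (τ * qs^2 / 2))
    refine hres.congr_deriv ?_
    field_simp
    ring
  -- direction along q_s
  have hd3 : fderiv ℝ F pt ((0,0),(0,0),((0,1),(0,0))) = -(τ * qs) := by
    apply dirD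
    have hfun : (fun r : ℝ => F (pt + r • (((0:ℝ),(0:ℝ)),((0:ℝ),(0:ℝ)),(((0:ℝ),(1:ℝ)),((0:ℝ),(0:ℝ)))))) =
        fun r : ℝ => qt^2 / (2 * e) - (σ (t, s))^2 * e / 2 - τ * (qs + r)^2 / 2 := by
      funext r
      simp [hF, hpt, Prod.smul_mk, Prod.mk_add_mk]
    rw [hfun]
    have h3a : HasDerivAt (fun r : ℝ => τ * (qs + r)^2 / 2) (τ * (2 * (qs + 0)) / 2) 0 := by
      simpa using ((((hasDerivAt_id (0 : ℝ)).const_add qs).pow 2).const_mul τ).div_const 2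
    have hres := ((hasDerivAt_const (0:ℝ) (qt^2 / (2 * e))).sub
      (hasDerivAt_const (0:ℝ) ((σ (t, s))^2 * e / 2))).sub h3a
    refine hres.congr_deriv ?_
    ring
  -- now use the field equation
  have e1 := heq ((0,0),(0,1),((0,0),(0,0)))
  have e2 := heq ((0,0),(0,0),((1,0),(0,0)))
  have e3 := heq ((0,0),(0,0),((0,1),(0,0)))
  rw [hωt, hωs, hXt, hXs] at e1 e2 e3
  simp only [hpt] at e1 e2 e3 hd1 hd2 hd3
  simp only [hd1, hd2, hd3] at e1 e2 e3
  norm_num at e1 e2 e3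
  -- e2 : Btq pt / e = qt / e  (roughly)
  have hBtq : Btq pt = qt := by
    field_simp at e2
    linarith
  have hBsq : Bsq pt = qs := e3.resolve_right hτ
  refine ⟨?_, hBtq, hBsq⟩
  rw [hBtq] at e1
  field_simp at e1
  have he2 : e ^ 2 ≠ 0 := pow_ne_zero 2 he
  have key : qt ^ 2 * e ^ 2 = (σ (t, s)) ^ 2 * e ^ 2 * e ^ 2 := by rw [show qt ^ 2 = (σ (t, s)) ^ 2 * e ^ 2 by linarith [e1]]
  have key2 := mul_right_cancel₀ he2 key
  rw [div_eq_iff he2]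
  linarith [key2]
end

section
/- For the Hamiltonian h = e (p^t)²/2 − σ(t,s)² e/2 − (p^s)²/(2τ) on P = ℝ² × (ℝ×ℝ_{>0}) × ℝ² with coordinates (t,s;q,e;p^t,p^s), forms η^t = dt, η^s = ds, ω^t = dq ∧ dp^t, ω^s = dq ∧ dp^s: the kernel intersection ker η^t ∩ ker η^s ∩ ker ω^t ∩ ker ω^s at any point is spanned by ∂/∂e, and any solution (X_t, X_s) of the precosymplectic Hamilton equations ι_{X_t}ω^t + ι_{X_s}ω^s = dh − (∂h/∂t)dt − (∂h/∂s)ds, dt(X_t)=1, ds(X_t)=0, dt(X_s)=0, ds(X_s)=1 can exist at a point only if (p^t)² = σ² there. -/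
/-- Hamiltonian analysis of the singular string model on
`P = ℝ² × (ℝ×ℝ_{>0}) × ℝ²`, `h = e(p^t)²/2 − σ²e/2 − (p^s)²/(2τ)`.
A point is `p = ((t,s),(q,e),(p^t,p^s))`. -/
theorem stmt_16
    (σ : ℝ × ℝ → ℝ) (hσ : ContDiff ℝ (⊤ : ℕ∞) σ) (τ : ℝ) (hτ : τ ≠ 0)
    (h : ((ℝ × ℝ) × (ℝ × ℝ) × (ℝ × ℝ)) → ℝ)
    (hhdef : ∀ p, h p =
      p.2.1.2 * (p.2.2.1)^2 / 2 - (σ p.1)^2 * p.2.1.2 / 2 - (p.2.2.2)^2 / (2 * τ))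
    -- ω^t = dq ∧ dp^t,  ω^s = dq ∧ dp^s (constant coefficient forms)
    (ωt ωs : ((ℝ × ℝ) × (ℝ × ℝ) × (ℝ × ℝ)) →
      ((ℝ × ℝ) × (ℝ × ℝ) × (ℝ × ℝ)) → ℝ)
    (hωt : ∀ u w, ωt u w = u.2.1.1 * w.2.2.1 - w.2.1.1 * u.2.2.1)
    (hωs : ∀ u w, ωs u w = u.2.1.1 * w.2.2.2 - w.2.1.1 * u.2.2.2) :
    -- (a) ker η^t ∩ ker η^s ∩ ker ω^t ∩ ker ω^s is spanned by ∂/∂e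
    ({v : (ℝ × ℝ) × (ℝ × ℝ) × (ℝ × ℝ) |
        v.1.1 = 0 ∧ v.1.2 = 0 ∧ (∀ w, ωt v w = 0) ∧ (∀ w, ωs v w = 0)} =
      {v : (ℝ × ℝ) × (ℝ × ℝ) × (ℝ × ℝ) | ∃ c : ℝ, v = ((0, 0), (0, c), (0, 0))}) ∧
    -- (b) solvability of the Hamilton equations at p forces (p^t)² = σ²
    (∀ p : (ℝ × ℝ) × (ℝ × ℝ) × (ℝ × ℝ), 0 < p.2.1.2 →
      (∃ Xt Xs : (ℝ × ℝ) × (ℝ × ℝ) × (ℝ × ℝ),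
        Xt.1.1 = 1 ∧ Xt.1.2 = 0 ∧ Xs.1.1 = 0 ∧ Xs.1.2 = 1 ∧
        (∀ w, ωt Xt w + ωs Xs w =
          fderiv ℝ h p w
            - fderiv ℝ h p ((1, 0), (0, 0), (0, 0)) * w.1.1
            - fderiv ℝ h p ((0, 1), (0, 0), (0, 0)) * w.1.2)) →
      (p.2.2.1)^2 = (σ p.1)^2) := by
  have hh : h = fun p : (ℝ × ℝ) × (ℝ × ℝ) × (ℝ × ℝ) =>
      p.2.1.2 * (p.2.2.1)^2 / 2 - (σ p.1)^2 * p.2.1.2 / 2 - (p.2.2.2)^2 / (2 * τ) :=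
    funext hhdef
  constructor
  · ext v
    simp only [Set.mem_setOf_eq]
    constructor
    · rintro ⟨h1, h2, h3, h4⟩
      have e1 := h3 ((0,0),(0,0),(1,0))
      have e2 := h3 ((0,0),(1,0),(0,0))
      have e3 := h4 ((0,0),(1,0),(0,0))
      rw [hωt] at e1 e2
      rw [hωs] at e3
      simp only at e1 e2 e3
      refine ⟨v.2.1.2, ?_⟩
      have hq : v.2.1.1 = 0 := by linarith
      have hpt : v.2.2.1 = 0 := by linarith
      have hps : v.2.2.2 = 0 := by linarith
      obtain ⟨⟨a,b⟩,⟨c,d⟩,⟨e,f⟩⟩ := v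
      simp_all
    · rintro ⟨c, rfl⟩
      refine ⟨rfl, rfl, fun w => ?_, fun w => ?_⟩ <;> simp [hωt, hωs]
  · rintro p hp ⟨Xt, Xs, _, _, _, _, heq⟩
    have hv := heq ((0,0),(0,1),(0,0))
    rw [hωt, hωs] at hv
    simp only at hv
    -- LHS is 0, so fderiv h p v = 0 where v = ∂/∂e
    have hfd : fderiv ℝ h p ((0,0),(0,1),(0,0)) = 0 := by
      have : (0:ℝ) = fderiv ℝ h p ((0,0),(0,1),(0,0))
          - fderiv ℝ h p ((1,0),(0,0),(0,0)) * 0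
          - fderiv ℝ h p ((0,1),(0,0),(0,0)) * 0 := by
        rw [← hv]; ring
      simpa using this.symm
    -- compute the directional derivative along e
    set v : (ℝ × ℝ) × (ℝ × ℝ) × (ℝ × ℝ) := ((0,0),(0,1),(0,0)) with hvdef
    have hdiff : DifferentiableAt ℝ h p := by
      rw [hh]
      have hs : DifferentiableAt ℝ (fun p : (ℝ × ℝ) × (ℝ × ℝ) × (ℝ × ℝ) => σ p.1) p :=
        ((hσ.differentiable (by simp)).comp differentiable_fst).differentiableAt
      have h1 : DifferentiableAt ℝ
          (fun p : (ℝ × ℝ) × (ℝ × ℝ) × (ℝ × ℝ) => p.2.1.2 * (p.2.2.1)^2 / 2) p := by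
        fun_prop
      have he : DifferentiableAt ℝ
          (fun p : (ℝ × ℝ) × (ℝ × ℝ) × (ℝ × ℝ) => p.2.1.2) p := by fun_prop
      have h2 : DifferentiableAt ℝ
          (fun p : (ℝ × ℝ) × (ℝ × ℝ) × (ℝ × ℝ) => (σ p.1)^2 * p.2.1.2 / 2) p := by
        simp only [div_eq_mul_inv]
        exact ((hs.pow 2).mul he).mul_const _
      have h3 : DifferentiableAt ℝ
          (fun p : (ℝ × ℝ) × (ℝ × ℝ) × (ℝ × ℝ) => (p.2.2.2)^2 / (2 * τ)) p := by
        fun_prop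
      exact (h1.sub h2).sub h3
    have hL : HasDerivAt (fun c : ℝ => (p.1, (p.2.1.1, p.2.1.2 + c), p.2.2)) v 0 := by
      have : HasDerivAt (fun c : ℝ => p + c • v) v 0 := by
        simpa using ((hasDerivAt_id (0:ℝ)).smul_const v).const_add p
      convert this using 2 with c
      simp [hvdef, Prod.ext_iff]
    have hL0 : (fun c : ℝ => (p.1, (p.2.1.1, p.2.1.2 + c), p.2.2)) 0 = p := by
      simp
    have hcomp : HasDerivAt (fun c : ℝ => h (p.1, (p.2.1.1, p.2.1.2 + c), p.2.2))
        (fderiv ℝ h p v) 0 := by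
      have hdiff' : HasFDerivAt h (fderiv ℝ h p)
          ((fun c : ℝ => (p.1, (p.2.1.1, p.2.1.2 + c), p.2.2)) 0) := by
        rw [hL0]; exact hdiff.hasFDerivAt
      exact hdiff'.comp_hasDerivAt 0 hL
    have hcomp2 : HasDerivAt (fun c : ℝ => h (p.1, (p.2.1.1, p.2.1.2 + c), p.2.2))
        ((p.2.2.1)^2 / 2 - (σ p.1)^2 / 2) 0 := by
      have : (fun c : ℝ => h (p.1, (p.2.1.1, p.2.1.2 + c), p.2.2)) =
          fun c : ℝ => (p.2.1.2 + c) * (p.2.2.1)^2 / 2 - (σ p.1)^2 * (p.2.1.2 + c) / 2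
            - (p.2.2.2)^2 / (2 * τ) := by
        funext c; rw [hhdef]
      rw [this]
      have h1 : HasDerivAt (fun c : ℝ => p.2.1.2 + c) 1 0 := by
        simpa using (hasDerivAt_id (0:ℝ)).const_add p.2.1.2
      have := (((h1.mul_const ((p.2.2.1)^2)).div_const 2).sub
        (((h1.const_mul ((σ p.1)^2)).div_const 2))).sub_const ((p.2.2.2)^2 / (2 * τ))
      exact this.congr_deriv (by ring)
    have := hcomp.unique hcomp2
    rw [hfd] at this
    linarith [this.symm]
end
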